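/- arXiv:2512.06522 — 2 statements merged into one kernel-verified Lean document; each statement's English description precedes it below -/
import Mathlib

section
/- For every matrix X ∈ ℝ^{n×p}, the between-cluster sum of squares identity holds: ‖B X‖_F² = (|C1|·|C2| / N) · ‖X̄_{C1} − X̄_{C2}‖₂². -/
open Matrix
open scoped BigOperators

noncomputable def nuVec {n : ℕ} (C1 C2 : Finset (Fin n)) : Fin n → ℝ :=
  fun i => (if i ∈ C1 then ((C1.card : ℝ))⁻¹ else 0) - (if i ∈ C2 then ((C2.card : ℝ))⁻¹ else 0)

noncomputable def projB {n : ℕ} (C1 C2 : Finset (Fin n)) : Matrix (Fin n) (Fin n) ℝ :=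
  (∑ i, nuVec C1 C2 i ^ 2)⁻¹ • Matrix.vecMulVec (nuVec C1 C2) (nuVec C1 C2)

def indVec {n : ℕ} (C : Finset (Fin n)) : Fin n → ℝ := fun i => if i ∈ C then 1 else 0

noncomputable def centerProj {n : ℕ} (C : Finset (Fin n)) : Matrix (Fin n) (Fin n) ℝ :=
  Matrix.diagonal (indVec C) - ((C.card : ℝ))⁻¹ • Matrix.vecMulVec (indVec C) (indVec C)

noncomputable def projW {n : ℕ} (C1 C2 : Finset (Fin n)) : Matrix (Fin n) (Fin n) ℝ :=
  centerProj C1 + centerProj C2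

def frobSq {n p : ℕ} (X : Matrix (Fin n) (Fin p) ℝ) : ℝ := ∑ i, ∑ j, X i j ^ 2

noncomputable def clusterMean {n p : ℕ} (C : Finset (Fin n)) (X : Matrix (Fin n) (Fin p) ℝ) :
    Fin p → ℝ :=
  fun j => (∑ i ∈ C, X i j) / C.card

/-!
`B` is the orthogonal projection onto the line spanned by `ν`, so
`‖B X‖_F² = ‖νᵀ X‖₂² / ‖ν‖₂²`. Here `νᵀ X = X̄_{C1} − X̄_{C2}`, and by disjointness
`‖ν‖₂² = 1/|C1| + 1/|C2| = N / (|C1| |C2|)`.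
-/

section FrobSq

variable {n p : ℕ}

theorem frobSq_smul (c : ℝ) (X : Matrix (Fin n) (Fin p) ℝ) :
    frobSq (c • X) = c ^ 2 * frobSq X := by
  simp only [frobSq, Matrix.smul_apply, smul_eq_mul, mul_pow, Finset.mul_sum]

theorem frobSq_vecMulVec (u : Fin n → ℝ) (w : Fin p → ℝ) :
    frobSq (vecMulVec u w) = (∑ i, u i ^ 2) * ∑ j, w j ^ 2 := by
  simp only [frobSq, vecMulVec_apply, mul_pow, Finset.sum_mul_sum]

/-- Valid also for `v = 0`, where both sides vanish because `0⁻¹ = 0`. -/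
theorem frobSq_rankOneProj_mul (v : Fin n → ℝ) (X : Matrix (Fin n) (Fin p) ℝ) :
    frobSq ((∑ i, v i ^ 2)⁻¹ • vecMulVec v v * X) = (∑ i, v i ^ 2)⁻¹ * ∑ j, (v ᵥ* X) j ^ 2 := by
  rw [Matrix.smul_mul, vecMulVec_mul, frobSq_smul, frobSq_vecMulVec, ← mul_assoc]
  congr 1
  rcases eq_or_ne (∑ i, v i ^ 2) 0 with hs | hs
  · simp [hs]
  · field_simp

end FrobSq

section Contrast

variable {n p : ℕ} {C1 C2 : Finset (Fin n)}

theorem sum_nuVec_sq (hdisj : Disjoint C1 C2) :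
    ∑ i, nuVec C1 C2 i ^ 2 = ((C1.card : ℝ))⁻¹ + ((C2.card : ℝ))⁻¹ := by
  have hsq : ∀ i, nuVec C1 C2 i ^ 2 =
      (if i ∈ C1 then ((C1.card : ℝ))⁻¹ ^ 2 else 0) +
        (if i ∈ C2 then ((C2.card : ℝ))⁻¹ ^ 2 else 0) := by
    intro i
    by_cases h1i : i ∈ C1
    · simp [nuVec, h1i, Finset.disjoint_left.mp hdisj h1i]
    · by_cases h2i : i ∈ C2 <;> simp [nuVec, h1i, h2i]
  simp only [hsq, Finset.sum_add_distrib, Finset.sum_ite_mem, Finset.univ_inter,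
    Finset.sum_const, nsmul_eq_mul]
  have hcancel (c : ℝ) : c * c⁻¹ ^ 2 = c⁻¹ := by
    simpa [sq, mul_assoc] using inv_mul_mul_self c⁻¹
  rw [hcancel, hcancel]

theorem nuVec_vecMul (X : Matrix (Fin n) (Fin p) ℝ) :
    nuVec C1 C2 ᵥ* X = clusterMean C1 X - clusterMean C2 X := by
  ext j
  simp only [vecMul, dotProduct, nuVec, sub_mul, ite_mul, zero_mul, Finset.sum_sub_distrib,
    Finset.sum_ite_mem, Finset.univ_inter, Pi.sub_apply, clusterMean, Finset.sum_div,
    inv_mul_eq_div]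

end Contrast

theorem stmt4_general {n p : ℕ} (C1 C2 : Finset (Fin n))
    (h1 : C1.Nonempty) (h2 : C2.Nonempty) (hdisj : Disjoint C1 C2)
    (X : Matrix (Fin n) (Fin p) ℝ) :
    frobSq (projB C1 C2 * X) =
      ((C1.card : ℝ) * (C2.card : ℝ) / ((C1.card : ℝ) + (C2.card : ℝ))) *
        ∑ j, (clusterMean C1 X j - clusterMean C2 X j) ^ 2 := by
  have hc1 : (C1.card : ℝ) ≠ 0 := by exact_mod_cast h1.card_pos.ne'
  have hc2 : (C2.card : ℝ) ≠ 0 := by exact_mod_cast h2.card_pos.ne'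
  rw [projB, frobSq_rankOneProj_mul, sum_nuVec_sq hdisj, nuVec_vecMul, inv_add_inv hc1 hc2,
    inv_div]
  simp only [Pi.sub_apply]

/-- Between-cluster sum of squares identity:
`‖B X‖_F² = (|C1|·|C2|/N) · ‖X̄_{C1} − X̄_{C2}‖₂²`. -/
theorem stmt4 {n p : ℕ} (hn : 1 ≤ n) (hp : 1 ≤ p) (C1 C2 : Finset (Fin n))
    (h1 : C1.Nonempty) (h2 : C2.Nonempty) (hdisj : Disjoint C1 C2)
    (X : Matrix (Fin n) (Fin p) ℝ) :
    frobSq (projB C1 C2 * X) =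
      ((C1.card : ℝ) * (C2.card : ℝ) / ((C1.card : ℝ) + (C2.card : ℝ))) *
        ∑ j, (clusterMean C1 X j - clusterMean C2 X j) ^ 2 :=
  stmt4_general C1 C2 h1 h2 hdisj X
end

section
/- Reconstruction of the data from the test statistic and auxiliary statistics: let X ∈ ℝ^{n×p} satisfy B X ≠ 0 and W X ≠ 0. Define R = (N − 2) · ‖B X‖_F² / ‖W X‖_F², η = B X / ‖B X‖_F, γ = W X / ‖W X‖_F, Δ = ‖B X‖_F² + ‖W X‖_F², and Γ = (I_n − B − W) X. Then √Δ · ( η · √(R / (N − 2 + R)) + γ · √((N − 2) / (N − 2 + R)) ) + Γ = X. -/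
open Matrix
open scoped BigOperators

lemma frobSq_pos {n p : ℕ} {M : Matrix (Fin n) (Fin p) ℝ} (h : M ≠ 0) : 0 < frobSq M := by
  obtain ⟨i, j, hij⟩ : ∃ i j, M i j ≠ 0 := by
    by_contra! hM
    exact h (Matrix.ext hM)
  have hrow : 0 < ∑ j', M i j' ^ 2 :=
    Finset.sum_pos' (fun _ _ => sq_nonneg _) ⟨j, Finset.mem_univ j, by positivity⟩
  exact Finset.sum_pos' (fun _ _ => Finset.sum_nonneg fun _ _ => sq_nonneg _)
    ⟨i, Finset.mem_univ i, hrow⟩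

lemma centerProj_singleton {n : ℕ} (i : Fin n) : centerProj ({i} : Finset (Fin n)) = 0 := by
  ext j k
  by_cases hj : j = i <;> by_cases hk : k = i <;> by_cases hjk : j = k <;>
    simp_all [centerProj, indVec, Matrix.vecMulVec_apply]

lemma two_lt_card_add_card_of_projW_mul_ne_zero {n p : ℕ} {C1 C2 : Finset (Fin n)}
    (h1 : C1.Nonempty) (h2 : C2.Nonempty) {X : Matrix (Fin n) (Fin p) ℝ}
    (hW : projW C1 C2 * X ≠ 0) : (2 : ℝ) < C1.card + C2.card := by
  suffices 2 < C1.card + C2.card by exact_mod_cast this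
  by_contra! hle
  have := h1.card_pos
  have := h2.card_pos
  obtain ⟨i1, rfl⟩ := Finset.card_eq_one.mp (by omega : C1.card = 1)
  obtain ⟨i2, rfl⟩ := Finset.card_eq_one.mp (by omega : C2.card = 1)
  exact hW (by simp [projW, centerProj_singleton])

lemma sqrt_div_mul_inv_sqrt {a c : ℝ} (ha : 0 < a) : √(a / c) * (√a)⁻¹ = (√c)⁻¹ := by
  rw [Real.sqrt_div ha.le, div_mul_eq_mul_div, mul_inv_cancel₀ (Real.sqrt_pos.mpr ha).ne', one_div]

/-- With `R = m a / b`, the weights `R / (m + R)` and `m / (m + R)` are `a / (a + b)` and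
`b / (a + b)`. -/
lemma sqrt_add_smul_normalized_eq_add {E : Type*} [AddCommGroup E] [Module ℝ E]
    {a b m R : ℝ} (ha : 0 < a) (hb : 0 < b) (hm : 0 < m) (hR : R = m * a / b) (U V : E) :
    √(a + b) • (√(R / (m + R)) • (√a)⁻¹ • U + √(m / (m + R)) • (√b)⁻¹ • V) = U + V := by
  have hab : 0 < a + b := by linarith
  have hmR : m + R = m * (a + b) / b := by rw [hR]; field_simp; ring
  have hR_weight : R / (m + R) = a / (a + b) := by
    rw [hmR, hR]; field_simp
  have hm_weight : m / (m + R) = b / (a + b) := by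
    rw [hmR]; field_simp
  have hcancel : √(a + b) * (√(a + b))⁻¹ = 1 := mul_inv_cancel₀ (Real.sqrt_pos.mpr hab).ne'
  simp only [hR_weight, hm_weight, smul_add, smul_smul, sqrt_div_mul_inv_sqrt ha,
    sqrt_div_mul_inv_sqrt hb, hcancel, one_smul]

theorem stmt9_general {n p : ℕ} (C1 C2 : Finset (Fin n))
    (h1 : C1.Nonempty) (h2 : C2.Nonempty)
    (X : Matrix (Fin n) (Fin p) ℝ)
    (hB : projB C1 C2 * X ≠ 0) (hW : projW C1 C2 * X ≠ 0)
    (N R Δ : ℝ) (η γ Γ : Matrix (Fin n) (Fin p) ℝ)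
    (hN : N = (C1.card : ℝ) + (C2.card : ℝ))
    (hR : R = (N - 2) * frobSq (projB C1 C2 * X) / frobSq (projW C1 C2 * X))
    (hη : η = (Real.sqrt (frobSq (projB C1 C2 * X)))⁻¹ • (projB C1 C2 * X))
    (hγ : γ = (Real.sqrt (frobSq (projW C1 C2 * X)))⁻¹ • (projW C1 C2 * X))
    (hΔ : Δ = frobSq (projB C1 C2 * X) + frobSq (projW C1 C2 * X))
    (hΓ : Γ = (1 - projB C1 C2 - projW C1 C2) * X) :
    Real.sqrt Δ •
        (Real.sqrt (R / (N - 2 + R)) • η + Real.sqrt ((N - 2) / (N - 2 + R)) • γ) + Γ = X := by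
  have hN2 : 0 < N - 2 := by
    linarith [hN, two_lt_card_add_card_of_projW_mul_ne_zero h1 h2 hW]
  rw [hΔ, hη, hγ, hΓ, sqrt_add_smul_normalized_eq_add (frobSq_pos hB) (frobSq_pos hW) hN2 hR,
    Matrix.sub_mul, Matrix.sub_mul, Matrix.one_mul]
  abel

/-- paper's Lemma 2. Reconstruction of the data matrix from the F-type test
statistic `R` and the auxiliary statistics `(η, γ, Δ, Γ)`:
`√Δ · (η·√(R/(N−2+R)) + γ·√((N−2)/(N−2+R))) + Γ = X`. -/
theorem stmt9 {n p : ℕ} (hn : 1 ≤ n) (hp : 1 ≤ p) (C1 C2 : Finset (Fin n))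
    (h1 : C1.Nonempty) (h2 : C2.Nonempty) (hdisj : Disjoint C1 C2)
    (X : Matrix (Fin n) (Fin p) ℝ)
    (hB : projB C1 C2 * X ≠ 0) (hW : projW C1 C2 * X ≠ 0)
    (N R Δ : ℝ) (η γ Γ : Matrix (Fin n) (Fin p) ℝ)
    (hN : N = (C1.card : ℝ) + (C2.card : ℝ))
    (hR : R = (N - 2) * frobSq (projB C1 C2 * X) / frobSq (projW C1 C2 * X))
    (hη : η = (Real.sqrt (frobSq (projB C1 C2 * X)))⁻¹ • (projB C1 C2 * X))
    (hγ : γ = (Real.sqrt (frobSq (projW C1 C2 * X)))⁻¹ • (projW C1 C2 * X))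
    (hΔ : Δ = frobSq (projB C1 C2 * X) + frobSq (projW C1 C2 * X))
    (hΓ : Γ = (1 - projB C1 C2 - projW C1 C2) * X) :
    Real.sqrt Δ •
        (Real.sqrt (R / (N - 2 + R)) • η + Real.sqrt ((N - 2) / (N - 2 + R)) • γ) + Γ = X :=
  stmt9_general C1 C2 h1 h2 X hB hW N R Δ η γ Γ hN hR hη hγ hΔ hΓ
end
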